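/- arXiv:2105.05292 — 6 statements merged into one kernel-verified Lean document; each statement's English description precedes it below -/
import Mathlib

section
/- For all natural numbers k ≥ 1 and n with k ≤ n, the homogeneous symmetric polynomial h_{k}(x_1,...,x_{n-k+1}) equals the alternating sum over i from 1 to k of (-1)^{i+1} · e_i(x_1,...,x_n) · h_{k-i}(x_1,...,x_{n-k+1}). -/
/-!
With `E_a(t) = ∏_{i<a} (1 + x_i t)` and `H_b(t) = ∏_{i<b} (1 - x_i t)⁻¹`, the sum
`∑_i (-1)^i e_i(x_1..x_a) h_{k-i}(x_1..x_b)` is the coefficient of `t^k` in `E_a(-t) H_b(t)`.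
For `b ≤ a` this series is the polynomial `∏_{b≤i<a} (1 - x_i t)` of degree `a - b`, so the
coefficient vanishes once `k > a - b`; for `a = n`, `b = n + 1 - k` this is the theorem, after
moving the `i = 0` term to the other side. Adding the variable `x_m` to either factor multiplies
the series by `1 - x_m t` or divides it by it, which gives the recursions the argument runs on.
-/

open MvPolynomial Finset

noncomputable def esymb (R : Type) [CommRing R] (n m k : ℕ) : MvPolynomial (Fin n) R :=
  ∑ S ∈ (Finset.univ.filter (fun i : Fin n => (i : ℕ) < m)).powersetCard k, ∏ i ∈ S, X i

noncomputable def hsymb (R : Type) [CommRing R] (n m k : ℕ) : MvPolynomial (Fin n) R :=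
  ∑ μ ∈ (Finset.univ.filter (fun i : Fin n => (i : ℕ) < m)).sym k,
    ((μ : Multiset (Fin n)).map X).prod

namespace Finset

variable {α A : Type*} [DecidableEq α] [CommSemiring A] (f : α → A) {a : α} {s : Finset α}

theorem sum_powersetCard_succ_insert_prod (h : a ∉ s) (k : ℕ) :
    ∑ t ∈ (insert a s).powersetCard (k + 1), ∏ i ∈ t, f i =
      ∑ t ∈ s.powersetCard (k + 1), ∏ i ∈ t, f i + f a * ∑ t ∈ s.powersetCard k, ∏ i ∈ t, f i := by
  simp only [← esymm_map_val, insert_val_of_notMem h, Multiset.map_cons, Multiset.esymm,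
    Multiset.powersetCard_cons, Multiset.map_add, Multiset.sum_add, Multiset.map_map,
    Function.comp_def, Multiset.prod_cons, Multiset.sum_map_mul_left]

theorem sym_succ_insert (h : a ∉ s) (k : ℕ) :
    (insert a s).sym (k + 1) = s.sym (k + 1) ∪ ((insert a s).sym k).image (Sym.cons a) := by
  ext μ
  simp only [mem_union, mem_sym_iff, mem_insert, mem_image]
  constructor
  · intro hμ
    by_cases haμ : a ∈ μ
    · exact .inr ⟨μ.erase a haμ, fun b hb => hμ b (Multiset.mem_of_mem_erase hb),
        Sym.cons_erase haμ⟩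
    · exact .inl fun b hb => (hμ b hb).resolve_left (by rintro rfl; exact haμ hb)
  · rintro (hμ | ⟨ν, hν, rfl⟩) b hb
    · exact .inr (hμ b hb)
    · rcases Sym.mem_cons.1 hb with rfl | hb
      exacts [.inl rfl, hν b hb]

theorem sum_sym_succ_insert_prod (h : a ∉ s) (k : ℕ) :
    ∑ μ ∈ (insert a s).sym (k + 1), ((μ : Multiset α).map f).prod =
      ∑ μ ∈ s.sym (k + 1), ((μ : Multiset α).map f).prod +
        f a * ∑ μ ∈ (insert a s).sym k, ((μ : Multiset α).map f).prod := by
  have hdisj : Disjoint (s.sym (k + 1)) (((insert a s).sym k).image (Sym.cons a)) := by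
    simp only [disjoint_left, mem_image, not_exists, not_and]
    rintro _ hμ ν - rfl
    exact h (mem_sym_iff.1 hμ a (Sym.mem_cons_self a ν))
  rw [sym_succ_insert h, sum_union hdisj, sum_image fun μ _ ν _ => (Sym.cons_inj_right a μ ν).1,
    mul_sum]
  simp only [Sym.coe_cons, Multiset.map_cons, Multiset.prod_cons]

end Finset

section

variable (R : Type) [CommRing R] {n : ℕ}

lemma filter_val_lt_succ {m : ℕ} (hm : m < n) :
    univ.filter (fun i : Fin n => (i : ℕ) < m + 1) =
      insert ⟨m, hm⟩ (univ.filter fun i : Fin n => (i : ℕ) < m) := by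
  ext i
  simp only [mem_filter, mem_univ, true_and, mem_insert, Fin.ext_iff]
  omega

lemma esymb_zero_right (m : ℕ) : esymb R n m 0 = 1 := by
  simp [esymb]

lemma hsymb_zero_right (m : ℕ) : hsymb R n m 0 = 1 := by
  simp [hsymb, Sym.eq_nil_of_card_zero]

lemma esymb_zero_succ (k : ℕ) : esymb R n 0 (k + 1) = 0 := by
  simp only [esymb, Nat.not_lt_zero, filter_false]
  rw [powersetCard_eq_empty.2 (by simp), sum_empty]

lemma hsymb_zero_succ (k : ℕ) : hsymb R n 0 (k + 1) = 0 := by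
  simp [hsymb]

lemma esymb_succ_succ {m : ℕ} (hm : m < n) (k : ℕ) :
    esymb R n (m + 1) (k + 1) = esymb R n m (k + 1) + X ⟨m, hm⟩ * esymb R n m k := by
  rw [esymb, filter_val_lt_succ hm, sum_powersetCard_succ_insert_prod _ (by simp)]
  rfl

lemma hsymb_succ_succ {m : ℕ} (hm : m < n) (k : ℕ) :
    hsymb R n (m + 1) (k + 1) = hsymb R n m (k + 1) + X ⟨m, hm⟩ * hsymb R n (m + 1) k := by
  simp only [hsymb, filter_val_lt_succ hm]
  exact sum_sym_succ_insert_prod _ (by simp) k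

noncomputable def ehConv (n a b k : ℕ) : MvPolynomial (Fin n) R :=
  ∑ i ∈ range (k + 1), (-1) ^ i * esymb R n a i * hsymb R n b (k - i)

lemma ehConv_succ_right (a : ℕ) {b : ℕ} (hb : b < n) (k : ℕ) :
    ehConv R n a (b + 1) (k + 1) =
      ehConv R n a b (k + 1) + X ⟨b, hb⟩ * ehConv R n a (b + 1) k := by
  have hterm : ∀ i ∈ range (k + 1), (-1) ^ i * esymb R n a i * hsymb R n (b + 1) (k + 1 - i) =
      (-1) ^ i * esymb R n a i * hsymb R n b (k + 1 - i) +
        X ⟨b, hb⟩ * ((-1) ^ i * esymb R n a i * hsymb R n (b + 1) (k - i)) := by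
    intro i hi
    rw [Nat.sub_add_comm (mem_range_succ_iff.1 hi), hsymb_succ_succ R hb]
    ring
  rw [ehConv, ehConv, ehConv, sum_range_succ _ (k + 1), sum_range_succ _ (k + 1),
    sum_congr rfl hterm, sum_add_distrib, mul_sum, Nat.sub_self, hsymb_zero_right,
    hsymb_zero_right]
  ring

lemma ehConv_succ_left {a : ℕ} (ha : a < n) (b k : ℕ) :
    ehConv R n (a + 1) b (k + 1) = ehConv R n a b (k + 1) - X ⟨a, ha⟩ * ehConv R n a b k := by
  have hterm : ∀ i ∈ range (k + 1),
      (-1) ^ (i + 1) * esymb R n (a + 1) (i + 1) * hsymb R n b (k + 1 - (i + 1)) =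
        (-1) ^ (i + 1) * esymb R n a (i + 1) * hsymb R n b (k + 1 - (i + 1)) -
          X ⟨a, ha⟩ * ((-1) ^ i * esymb R n a i * hsymb R n b (k - i)) := by
    intro i _
    rw [esymb_succ_succ R ha, Nat.add_sub_add_right]
    ring
  rw [ehConv, ehConv, ehConv, sum_range_succ' _ (k + 1), sum_range_succ' _ (k + 1),
    sum_congr rfl hterm, sum_sub_distrib, mul_sum, esymb_zero_right, esymb_zero_right]
  ring

lemma ehConv_self {m : ℕ} (hm : m ≤ n) (k : ℕ) : ehConv R n m m (k + 1) = 0 := by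
  induction m with
  | zero =>
    refine sum_eq_zero fun i _ => ?_
    cases i with
    | zero => simp [hsymb_zero_succ]
    | succ i => simp [esymb_zero_succ]
  | succ m ih =>
    rw [ehConv_succ_left R hm, ehConv_succ_right R m hm, ih (by omega)]
    ring

lemma ehConv_eq_zero {a b k : ℕ} (hba : b ≤ a) (han : a ≤ n) (hk : a < b + k) :
    ehConv R n a b k = 0 := by
  induction a, hba using Nat.le_induction generalizing k with
  | base =>
    obtain ⟨k, rfl⟩ : ∃ j, k = j + 1 := ⟨k - 1, by omega⟩
    exact ehConv_self R han k
  | succ a hba ih =>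
    obtain ⟨k, rfl⟩ : ∃ j, k = j + 1 := ⟨k - 1, by omega⟩
    rw [ehConv_succ_left R han, ih (by omega) (by omega), ih (by omega) (by omega)]
    ring

end

/-- Proposition: h_{k}(x_1,…,x_{n-k+1}) = ∑_{i=1}^{k} (-1)^{i+1} e_i(x_1,…,x_n) h_{k-i}(x_1,…,x_{n-k+1}). -/
theorem stmt0 (R : Type) [CommRing R] (n k : ℕ) (hk : 1 ≤ k) (hkn : k ≤ n) :
    hsymb R n (n + 1 - k) k =
      ∑ i ∈ Finset.Icc 1 k, (-1 : MvPolynomial (Fin n) R) ^ (i + 1) *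
        esymb R n n i * hsymb R n (n + 1 - k) (k - i) := by
  have hconv : ehConv R n n (n + 1 - k) k = 0 := ehConv_eq_zero R (by omega) le_rfl (by omega)
  rw [ehConv, range_eq_Ico, sum_eq_sum_Ico_succ_bot (Nat.succ_pos k), zero_add,
    Nat.succ_eq_add_one, Ico_add_one_right_eq_Icc, pow_zero, esymb_zero_right, one_mul, one_mul,
    Nat.sub_zero] at hconv
  calc hsymb R n (n + 1 - k) k
      = -∑ i ∈ Icc 1 k, (-1) ^ i * esymb R n n i * hsymb R n (n + 1 - k) (k - i) := by
        linear_combination hconv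
    _ = _ := by
        rw [← sum_neg_distrib]
        exact sum_congr rfl fun i _ => by ring
end

section
/- For every natural number i with 1 ≤ i ≤ k ≤ n, the polynomial h_i(x_1,...,x_{n-i+1}) belongs to the ideal generated by e_1(x_1,...,x_n), ..., e_k(x_1,...,x_n) in the polynomial ring in n variables. -/
open MvPolynomial Finset

/-!
With `E(t) = ∑ (-1)^j e_j t^j = ∏ (1 - x_a t)` and `H(t) = ∑ h_d t^d = ∏ (1 - x_a t)⁻¹` one has
`E(t) H(t) = 1`, checked by adding one variable at a time. For `1 ≤ d ≤ k` the coefficient of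
`t^d` writes `h_d(x_1, …, x_n)` as a combination of `e_1, …, e_d`, so it lies in
`I = (e_1, …, e_k)`. Removing a variable from a set `s ∪ {a}` gives
`h_{d+1}(s) = h_{d+1}(s ∪ {a}) - x_a h_d(s ∪ {a})`, hence by induction `h_d(s) ∈ I` whenever
`s` misses fewer than `d ≤ k` of the variables; `{x_1, …, x_{n+1-i}}` misses at most `i - 1`.
-/

namespace Multiset

variable {A : Type*} [CommSemiring A]

theorem esymm_zero (s : Multiset A) : s.esymm 0 = 1 := by
  simp [esymm]

theorem esymm_cons_succ (a : A) (s : Multiset A) (j : ℕ) :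
    (a ::ₘ s).esymm (j + 1) = s.esymm (j + 1) + a * s.esymm j := by
  simp [esymm, map_map, sum_map_mul_left]

end Multiset

namespace Finset

variable {ι A : Type*} [DecidableEq ι] [CommRing A] (s : Finset ι) (x : ι → A)

def hsymm (d : ℕ) : A :=
  ∑ μ ∈ s.sym d, ((μ : Multiset ι).map x).prod

theorem hsymm_zero : s.hsymm x 0 = 1 := by
  rw [hsymm, sym_zero, sum_singleton]
  rfl

theorem hsymm_insert {a : ι} (ha : a ∉ s) (d : ℕ) :
    (insert a s).hsymm x d = ∑ i : Fin (d + 1), x a ^ (i : ℕ) * s.hsymm x (d - i) := by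
  rw [hsymm, ← sum_coe_sort ((insert a s).sym d), ← (symInsertEquiv ha).symm.sum_comp,
    Fintype.sum_sigma]
  refine sum_congr rfl fun i _ => ?_
  rw [hsymm, ← sum_coe_sort (s.sym _), mul_sum]
  refine sum_congr rfl fun m _ => ?_
  simp [Sym.coe_fill, Sym.coe_replicate, mul_comm]

theorem hsymm_insert_succ {a : ι} (ha : a ∉ s) (d : ℕ) :
    (insert a s).hsymm x (d + 1) = s.hsymm x (d + 1) + x a * (insert a s).hsymm x d := by
  rw [hsymm_insert s x ha, hsymm_insert s x ha, Fin.sum_univ_succ, mul_sum]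
  simp [pow_succ, mul_assoc, mul_comm]

def esymmSeries : PowerSeries A :=
  PowerSeries.mk fun j => (-1) ^ j * (s.val.map x).esymm j

def hsymmSeries : PowerSeries A :=
  PowerSeries.mk (s.hsymm x)

theorem esymmSeries_insert {a : ι} (ha : a ∉ s) :
    (insert a s).esymmSeries x = (1 - PowerSeries.C (x a) * PowerSeries.X) * s.esymmSeries x := by
  ext (_ | j)
  · simp [esymmSeries, Multiset.esymm_zero]
  · simp [esymmSeries, insert_val_of_notMem ha, Multiset.esymm_cons_succ, sub_mul,
      PowerSeries.coeff_succ_X_mul, mul_assoc, pow_succ]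
    ring

theorem hsymmSeries_insert {a : ι} (ha : a ∉ s) :
    (1 - PowerSeries.C (x a) * PowerSeries.X) * (insert a s).hsymmSeries x = s.hsymmSeries x := by
  ext (_ | d)
  · simp [hsymmSeries, hsymm_zero]
  · simp [hsymmSeries, hsymm_insert_succ s x ha, sub_mul, PowerSeries.coeff_succ_X_mul, mul_assoc]

theorem esymmSeries_mul_hsymmSeries : s.esymmSeries x * s.hsymmSeries x = 1 := by
  induction s using Finset.induction_on with
  | empty =>
    ext (_ | d)
    · simp [esymmSeries, hsymmSeries, PowerSeries.coeff_mul, Multiset.esymm_zero, hsymm_zero]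
    · simp [esymmSeries, hsymmSeries, PowerSeries.coeff_mul, hsymm, Nat.sum_antidiagonal_succ,
        Multiset.esymm, Multiset.powersetCard_zero_right]
  | insert a s ha ih =>
    rw [esymmSeries_insert s x ha, mul_comm (1 - _), mul_assoc, hsymmSeries_insert s x ha, ih]

theorem sum_antidiagonal_esymm_mul_hsymm {d : ℕ} (hd : d ≠ 0) :
    ∑ p ∈ antidiagonal d, (-1) ^ p.1 * (s.val.map x).esymm p.1 * s.hsymm x p.2 = 0 := by
  simpa [PowerSeries.coeff_mul, esymmSeries, hsymmSeries, hd, mul_assoc] using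
    congr_arg (PowerSeries.coeff d) (s.esymmSeries_mul_hsymmSeries x)

variable {s x} {I : Ideal A} {k : ℕ}

theorem hsymm_mem_of_esymm_mem (hE : ∀ p ∈ Set.Icc 1 k, (s.val.map x).esymm p ∈ I) {d : ℕ}
    (hd : d ∈ Set.Icc 1 k) : s.hsymm x d ∈ I := by
  obtain ⟨d, rfl⟩ : ∃ d', d = d' + 1 := ⟨d - 1, by grind⟩
  have h := s.sum_antidiagonal_esymm_mul_hsymm x d.succ_ne_zero
  rw [Nat.sum_antidiagonal_succ] at h
  simp only [pow_zero, one_mul, Multiset.esymm_zero] at h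
  rw [eq_neg_of_add_eq_zero_left h]
  refine I.neg_mem (I.sum_mem fun p hp => I.mul_mem_right _ (I.mul_mem_left _ (hE _ ?_)))
  have := mem_antidiagonal.mp hp
  exact ⟨by omega, by grind⟩

theorem hsymm_mem_of_subset {u : Finset ι} (hE : ∀ p ∈ Set.Icc 1 k, (u.val.map x).esymm p ∈ I)
    (hsu : s ⊆ u) {d : ℕ} (hd : #(u \ s) < d) (hdk : d ≤ k) : s.hsymm x d ∈ I := by
  obtain ⟨c, hc⟩ : ∃ c, #(u \ s) = c := ⟨_, rfl⟩
  rw [hc] at hd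
  induction c generalizing s d with
  | zero =>
    rw [card_eq_zero, sdiff_eq_empty_iff_subset] at hc
    rw [hsu.antisymm hc]
    exact hsymm_mem_of_esymm_mem hE ⟨hd, hdk⟩
  | succ c ih =>
    obtain ⟨a, ha⟩ : (u \ s).Nonempty := card_pos.mp (by omega)
    obtain ⟨hau, has⟩ := mem_sdiff.mp ha
    obtain ⟨d, rfl⟩ : ∃ d', d = d' + 1 := ⟨d - 1, by omega⟩
    have hsu' : insert a s ⊆ u := insert_subset hau hsu
    have hc' : #(u \ insert a s) = c := by
      rw [sdiff_insert, card_erase_of_mem ha, hc, Nat.add_sub_cancel]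
    rw [eq_sub_of_add_eq (hsymm_insert_succ s x has d).symm]
    exact I.sub_mem (ih hsu' hdk (by omega) hc')
      (I.mul_mem_left _ (ih hsu' (by omega) (by omega) hc'))

end Finset

theorem stmt7_general (R : Type) [CommRing R] (n k i : ℕ) (hi : 1 ≤ i) (hik : i ≤ k) :
    hsymb R n (n + 1 - i) i ∈ Ideal.span ((fun j => esymb R n n j) '' Set.Icc 1 k) := by
  let u : Finset (Fin n) := {j | (j : ℕ) < n}
  let s : Finset (Fin n) := {j | (j : ℕ) < n + 1 - i}
  have hE : ∀ p ∈ Set.Icc 1 k, ((u.val.map X).esymm p : MvPolynomial (Fin n) R) ∈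
      Ideal.span ((fun j => esymb R n n j) '' Set.Icc 1 k) := fun p hp => by
    rw [esymm_map_val]
    exact Ideal.subset_span ⟨p, hp, rfl⟩
  have hsu : s ⊆ u := by
    intro j
    simp [s, u]
  have hcard : #(u \ s) < i := by
    rw [card_sdiff_of_subset hsu, Fin.card_filter_val_lt, Fin.card_filter_val_lt, min_self,
      Nat.min_def]
    split_ifs <;> omega
  exact hsymm_mem_of_subset hE hsu hcard hik

/-- h_i(x_1,…,x_{n-i+1}) ∈ ⟨e_1(x_1,…,x_n),…,e_k(x_1,…,x_n)⟩ for 1 ≤ i ≤ k ≤ n. -/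
theorem stmt7 (R : Type) [CommRing R] (n k i : ℕ) (hi : 1 ≤ i) (hik : i ≤ k) (hkn : k ≤ n) :
    hsymb R n (n + 1 - i) i ∈ Ideal.span ((fun j => esymb R n n j) '' Set.Icc 1 k) :=
  stmt7_general R n k i hi hik
end

section
/- For distinct i, j with 1 ≤ i, j ≤ k ≤ n, the S-polynomial identity holds: x_{n-j+1}^j · h_i(x_1,...,x_{n-i+1}) − x_{n-i+1}^i · h_j(x_1,...,x_{n-j+1}) = h_j(x_1,...,x_{n-j+1}) · ∑_{ℓ=0}^{i-1} x_{n-i+1}^ℓ h_{i-ℓ}(x_1,...,x_{n-i}) − h_i(x_1,...,x_{n-i+1}) · ∑_{ℓ=0}^{j-1} x_{n-j+1}^ℓ h_{j-ℓ}(x_1,...,x_{n-j}). -/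
open MvPolynomial Finset

variable {α : Type*} [DecidableEq α] {M : Type*} [CommRing M]

lemma sym_insert_sum (s : Finset α) (a : α) (ha : a ∉ s) (k : ℕ) (f : α → M) :
    ∑ μ ∈ (insert a s).sym (k + 1), ((μ : Multiset α).map f).prod
      = ∑ μ ∈ s.sym (k + 1), ((μ : Multiset α).map f).prod
        + f a * ∑ μ ∈ (insert a s).sym k, ((μ : Multiset α).map f).prod := by
  classical
  rw [← Finset.sum_filter_add_sum_filter_not ((insert a s).sym (k+1)) (fun μ => a ∈ μ)]
  have h1 : Finset.filter (fun μ => ¬ a ∈ μ) ((insert a s).sym (k+1)) = s.sym (k+1) := by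
    ext μ
    simp only [Finset.mem_filter, Finset.mem_sym_iff, Finset.mem_insert]
    constructor
    · rintro ⟨h, hna⟩ x hx
      rcases h x hx with h | h
      · exact absurd (h ▸ hx) hna
      · exact h
    · intro h
      exact ⟨fun x hx => Or.inr (h x hx), fun hx => ha (h a hx)⟩
  have h2 : ∑ μ ∈ Finset.filter (fun μ => a ∈ μ) ((insert a s).sym (k+1)),
      ((μ : Multiset α).map f).prod
      = f a * ∑ μ ∈ (insert a s).sym k, ((μ : Multiset α).map f).prod := by
    rw [Finset.mul_sum]
    refine Finset.sum_bij' (fun μ hμ => μ.erase a (Finset.mem_filter.mp hμ).2)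
      (fun μ hμ => a ::ₛ μ) ?_ ?_ ?_ ?_ ?_
    · intro μ hμ
      rw [Finset.mem_sym_iff]
      intro x hx
      exact Finset.mem_sym_iff.mp (Finset.mem_filter.mp hμ).1 x
        (Multiset.mem_of_mem_erase hx)
    · intro μ hμ
      rw [Finset.mem_filter]
      refine ⟨Finset.mem_sym_iff.mpr fun x hx => ?_, Sym.mem_cons_self a μ⟩
      rcases Sym.mem_cons.mp hx with h | h
      · exact h ▸ Finset.mem_insert_self a s
      · exact Finset.mem_sym_iff.mp hμ x h
    · intro μ hμ
      exact Sym.cons_erase _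
    · intro μ hμ
      exact Sym.erase_cons_head _ _ _
    · intro μ hμ
      have h := (Finset.mem_filter.mp hμ).2
      conv_lhs => rw [show (μ : Multiset α) = a ::ₘ ((μ : Multiset α).erase a) from
        (Multiset.cons_erase h).symm]
      rw [Multiset.map_cons, Multiset.prod_cons]
      rfl
  rw [h1, h2, add_comm]

lemma hsymb_zero (R : Type) [CommRing R] (n m : ℕ) : hsymb R n m 0 = 1 := by
  rw [hsymb, Finset.sym_zero, Finset.sum_singleton]
  rfl

lemma hsymb_rec (R : Type) [CommRing R] {n m : ℕ} (hm : m < n) (k : ℕ) :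
    hsymb R n (m + 1) (k + 1)
      = hsymb R n m (k + 1) + X (⟨m, hm⟩ : Fin n) * hsymb R n (m + 1) k := by
  have hins : (Finset.univ.filter (fun i : Fin n => (i : ℕ) < m + 1))
      = insert (⟨m, hm⟩ : Fin n) (Finset.univ.filter (fun i : Fin n => (i : ℕ) < m)) := by
    ext x
    simp only [Finset.mem_filter, Finset.mem_univ, true_and, Finset.mem_insert, Fin.ext_iff]
    omega
  have hnotmem : (⟨m, hm⟩ : Fin n) ∉ Finset.univ.filter (fun i : Fin n => (i : ℕ) < m) := by
    simp
  rw [hsymb, hsymb, hsymb, hins, sym_insert_sum _ _ hnotmem]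

lemma hsymb_sum (R : Type) [CommRing R] {n m : ℕ} (hm : m < n) (k : ℕ) :
    hsymb R n (m + 1) k
      = ∑ ℓ ∈ Finset.range (k + 1), X (⟨m, hm⟩ : Fin n) ^ ℓ * hsymb R n m (k - ℓ) := by
  induction k with
  | zero => simp [hsymb_zero]
  | succ k ih =>
      rw [hsymb_rec R hm k, ih, Finset.mul_sum,
        Finset.sum_range_succ' (fun ℓ => X (⟨m, hm⟩ : Fin n) ^ ℓ * hsymb R n m (k + 1 - ℓ)) (k + 1)]
      simp only [Nat.succ_sub_succ, pow_zero, one_mul, Nat.sub_zero, pow_succ]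
      rw [add_comm]
      congr 1
      exact Finset.sum_congr rfl fun ℓ _ => by ring


/-- The S-polynomial identity:
x_{n-j+1}^j h_i(x_1,…,x_{n-i+1}) − x_{n-i+1}^i h_j(x_1,…,x_{n-j+1})
 = h_j(x_1,…,x_{n-j+1}) ∑_{ℓ=0}^{i-1} x_{n-i+1}^ℓ h_{i-ℓ}(x_1,…,x_{n-i})
 − h_i(x_1,…,x_{n-i+1}) ∑_{ℓ=0}^{j-1} x_{n-j+1}^ℓ h_{j-ℓ}(x_1,…,x_{n-j}). -/
theorem stmt9 (R : Type) [CommRing R] (n k i j : ℕ) (hi : 1 ≤ i) (hj : 1 ≤ j)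
    (hik : i ≤ k) (hjk : j ≤ k) (hkn : k ≤ n) (hij : i ≠ j) :
    X (⟨n - j, by omega⟩ : Fin n) ^ j * hsymb R n (n + 1 - i) i -
        X (⟨n - i, by omega⟩ : Fin n) ^ i * hsymb R n (n + 1 - j) j =
      hsymb R n (n + 1 - j) j *
          (∑ ℓ ∈ Finset.range i, X (⟨n - i, by omega⟩ : Fin n) ^ ℓ * hsymb R n (n - i) (i - ℓ)) -
        hsymb R n (n + 1 - i) i *
          (∑ ℓ ∈ Finset.range j, X (⟨n - j, by omega⟩ : Fin n) ^ ℓ * hsymb R n (n - j) (j - ℓ)) := by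
  have key : ∀ (m : ℕ) (_ : 1 ≤ m) (_ : m ≤ n),
      hsymb R n (n + 1 - m) m
        = (∑ ℓ ∈ Finset.range m, X (⟨n - m, by omega⟩ : Fin n) ^ ℓ * hsymb R n (n - m) (m - ℓ))
          + X (⟨n - m, by omega⟩ : Fin n) ^ m := by
    intro m hm1 hmn
    have e : n + 1 - m = (n - m) + 1 := by omega
    rw [e, hsymb_sum R (show n - m < n by omega) m, Finset.sum_range_succ]
    simp [hsymb_zero]
  have Hi := key i hi (le_trans hik hkn)
  have Hj := key j hj (le_trans hjk hkn)
  rw [Hi, Hj]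
  ring
end

section
/- Let 1 ≤ i, j ≤ n with i ≠ j. With respect to the lexicographic monomial order with x_n > x_{n-1} > ... > x_1, the leading monomial of h_i(x_1,...,x_{n-i+1}) is x_{n-i+1}^i, and the leading monomials x_{n-j+1}^j · x_{n-i+1}^{i-1} · x_{n-i} and x_{n-i+1}^i · x_{n-j+1}^{j-1} · x_{n-j} are distinct. -/
/-!
A monomial of `h_k(x_1, …, x_m)` is a product of `k` variables of index at most `m`. In lex order
with later variables larger, such a monomial agrees with `x_m^k` in every variable above `x_m`,
and its `x_m`-exponent is at most `k`, with equality only for `x_m^k` itself.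
For `i < j` the two exponent vectors differ at `x_{n-i+1}`, whose exponent is `i - 1` on one side
and `i` on the other.
-/

open MvPolynomial Finset

/-- `d` is the leading monomial (exponent vector) of `p` with respect to the lexicographic
monomial order in which `x_n > x_{n-1} > ⋯ > x_1` (0-indexed: `X ⟨n-1⟩ > ⋯ > X ⟨0⟩`).
We compare exponent vectors in `Lex (Fin n →₀ ℕ)` after reversing the variables via
`Fin.revPerm`, since `Lex` makes the *smallest* index most significant. -/
def IsLexLeadMonom {n : ℕ} {R : Type} [CommRing R] (p : MvPolynomial (Fin n) R)
    (d : Fin n →₀ ℕ) : Prop :=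
  d ∈ p.support ∧ ∀ d' ∈ p.support,
    toLex (Finsupp.equivMapDomain Fin.revPerm d') ≤ toLex (Finsupp.equivMapDomain Fin.revPerm d)

theorem Multiset.toFinsupp_replicate {α : Type*} [DecidableEq α] (a : α) (k : ℕ) :
    toFinsupp (replicate k a) = Finsupp.single a k := by
  ext x
  simp [toFinsupp_apply, count_replicate, Finsupp.single_apply]

theorem Multiset.toFinsupp_map_equiv {α β : Type*} [DecidableEq α] [DecidableEq β] (e : α ≃ β)
    (s : Multiset α) : toFinsupp (s.map e) = Finsupp.equivMapDomain e (toFinsupp s) := by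
  ext x
  rw [Finsupp.equivMapDomain_apply, toFinsupp_apply, toFinsupp_apply,
    ← count_map_eq_count' e _ e.injective, Equiv.apply_symm_apply]

theorem Multiset.toLex_toFinsupp_le_single_card {α : Type*} [DecidableEq α] [LinearOrder α]
    {s : Multiset α} {r : α} (h : ∀ x ∈ s, r ≤ x) :
    toLex (toFinsupp s) ≤ toLex (Finsupp.single r (card s)) := by
  rcases (count_le_card r s).lt_or_eq with hlt | heq
  · refine le_of_lt (Finsupp.Lex.lt_iff.mpr ⟨r, fun j hj => ?_, ?_⟩)
    · have hjs : j ∉ s := fun hj' => (h j hj').not_gt hj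
      simp [toFinsupp_apply, count_eq_zero_of_notMem hjs, hj.ne]
    · simpa [toFinsupp_apply] using hlt
  · rw [eq_replicate_card.mpr fun x hx => (count_eq_card.mp heq x hx).symm, toFinsupp_replicate,
      card_replicate]

theorem prod_map_X_eq_monomial {σ R : Type*} [CommSemiring R] [DecidableEq σ] (s : Multiset σ) :
    (s.map X).prod = monomial (Multiset.toFinsupp s) (1 : R) := by
  induction s using Multiset.induction_on with
  | empty => simp
  | cons a s ih =>
    rw [Multiset.map_cons, Multiset.prod_cons, ih, X, monomial_mul, one_mul,
      ← Multiset.singleton_add, Multiset.toFinsupp_add, Multiset.toFinsupp_singleton]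

section hsymb

variable (R : Type) [CommRing R] (n m k : ℕ)

theorem hsymb_eq_sum_monomial :
    hsymb R n m k = ∑ d ∈ ((univ.filter fun i : Fin n => (i : ℕ) < m).sym k).image
      (fun μ : Sym (Fin n) k => Multiset.toFinsupp (μ : Multiset (Fin n))), monomial d 1 := by
  rw [Finset.sum_image fun μ _ ν _ h => Sym.coe_injective (Multiset.toFinsupp.injective h)]
  exact Finset.sum_congr rfl fun μ _ => prod_map_X_eq_monomial _

variable {R n m k}

theorem mem_support_hsymb_iff [Nontrivial R] {d : Fin n →₀ ℕ} :
    d ∈ (hsymb R n m k).support ↔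
      ∃ μ : Sym (Fin n) k, (∀ x ∈ μ, (x : ℕ) < m) ∧
        Multiset.toFinsupp (μ : Multiset (Fin n)) = d := by
  rw [mem_support_iff, hsymb_eq_sum_monomial, coeff_sum]
  simp [coeff_monomial]

end hsymb

theorem isLexLeadMonom_hsymb (R : Type) [CommRing R] [Nontrivial R] {n : ℕ} (a : Fin n)
    (k : ℕ) : IsLexLeadMonom (hsymb R n (a + 1) k) (Finsupp.single a k) := by
  refine ⟨mem_support_hsymb_iff.mpr ⟨Sym.replicate k a, ?_, ?_⟩, fun d hd => ?_⟩
  · simp [Sym.mem_replicate]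
  · rw [Sym.coe_replicate, Multiset.toFinsupp_replicate]
  obtain ⟨μ, hμ, rfl⟩ := mem_support_hsymb_iff.mp hd
  rw [← Multiset.toFinsupp_map_equiv, Finsupp.equivMapDomain_single]
  have hrev : ∀ x ∈ (μ : Multiset (Fin n)).map Fin.revPerm, Fin.revPerm a ≤ x := by
    rw [Multiset.forall_mem_map_iff]
    exact fun y hy => Fin.rev_le_rev.mpr (Nat.lt_succ_iff.mp (hμ y hy))
  simpa only [Multiset.card_map, Sym.card_coe] using Multiset.toLex_toFinsupp_le_single_card hrev

theorem single_add_single_add_single_ne_of_lt {n i j : ℕ} (hi : 1 ≤ i) (hij : i < j)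
    (hjn : j ≤ n) :
    Finsupp.single (⟨n - j, by omega⟩ : Fin n) j +
        Finsupp.single (⟨n - i, by omega⟩ : Fin n) (i - 1) +
        Finsupp.single (⟨n - i - 1, by omega⟩ : Fin n) 1 ≠
      Finsupp.single (⟨n - i, by omega⟩ : Fin n) i +
        Finsupp.single (⟨n - j, by omega⟩ : Fin n) (j - 1) +
        Finsupp.single (⟨n - j - 1, by omega⟩ : Fin n) 1 := by
  intro h
  have := DFunLike.congr_fun h ⟨n - i, by omega⟩
  simp only [Finsupp.add_apply, Finsupp.single_apply, Fin.mk.injEq] at this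
  split_ifs at this <;> omega

/-- In lex order with x_n > ⋯ > x_1, the leading monomial of h_i(x_1,…,x_{n-i+1}) is
x_{n-i+1}^i, and the monomials x_{n-j+1}^j x_{n-i+1}^{i-1} x_{n-i} and
x_{n-i+1}^i x_{n-j+1}^{j-1} x_{n-j} are distinct (for i ≠ j). -/
theorem stmt14 (R : Type) [CommRing R] [Nontrivial R] (n i j : ℕ)
    (hi : 1 ≤ i) (hin : i ≤ n) (hj : 1 ≤ j) (hjn : j ≤ n) (hij : i ≠ j) :
    IsLexLeadMonom (hsymb R n (n + 1 - i) i) (Finsupp.single (⟨n - i, by omega⟩ : Fin n) i) ∧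
    (Finsupp.single (⟨n - j, by omega⟩ : Fin n) j +
        Finsupp.single (⟨n - i, by omega⟩ : Fin n) (i - 1) +
        Finsupp.single (⟨n - i - 1, by omega⟩ : Fin n) 1 ≠
      Finsupp.single (⟨n - i, by omega⟩ : Fin n) i +
        Finsupp.single (⟨n - j, by omega⟩ : Fin n) (j - 1) +
        Finsupp.single (⟨n - j - 1, by omega⟩ : Fin n) 1) := by
  refine ⟨?_, ?_⟩
  · rw [show n + 1 - i = n - i + 1 by omega]
    exact isLexLeadMonom_hsymb R ⟨n - i, by omega⟩ i
  · rcases lt_or_gt_of_ne hij with hlt | hgt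
    · exact single_add_single_add_single_ne_of_lt hi hlt hjn
    · exact (single_add_single_add_single_ne_of_lt hj hgt hin).symm
end

section
/- For k ≤ n, the ideal in the polynomial ring k[x_1,...,x_n] generated by e_1,...,e_k (elementary symmetric polynomials in all n variables) contains, for each 1 ≤ i ≤ k, a polynomial whose leading monomial in lex order (x_n > ... > x_1) is x_{n-i+1}^i; in particular h_i(x_1,...,x_{n-i+1}) is such a polynomial. -/
open MvPolynomial Finset

/-! With `E_s(T) = ∏_{a ∈ s} (1 - x_a T)` and `H_s(T) = ∑_j h_j(s) T^j` one has `E_s H_s = 1`, so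
for `s ⊆ t` the product `E_t H_s = E_{t \ s}` is a polynomial of degree `|t \ s|`. Taking `t` to be
all `n` variables and `s = {x_1, …, x_{n-i+1}}`, `|t \ s| = i - 1`, so the coefficient of `T^i`
gives `∑_j (-1)^j e_j h_{i-j}(s) = 0`, which expresses `h_i(s)` through `e_1, …, e_i`.
The monomials of `h_i(s)` are exactly those of degree `i` in the variables of `s`; the lex largest
of them is the `i`-th power of the largest variable `x_{n-i+1}` of `s`. -/

namespace MvPolynomial

variable (R : Type*) [CommRing R] {σ : Type*}

noncomputable def esymmOn (s : Finset σ) (j : ℕ) : MvPolynomial σ R :=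
  ∑ t ∈ s.powersetCard j, ∏ a ∈ t, X a

noncomputable def hsymmOn [DecidableEq σ] (s : Finset σ) (j : ℕ) : MvPolynomial σ R :=
  ∑ μ ∈ s.sym j, ((μ : Multiset σ).map X).prod

variable {R}

@[simp]
lemma esymmOn_zero (s : Finset σ) : esymmOn R s 0 = 1 := by
  simp [esymmOn]

lemma esymmOn_eq_zero_of_card_lt {s : Finset σ} {j : ℕ} (h : #s < j) : esymmOn R s j = 0 := by
  simp [esymmOn, powersetCard_eq_empty.mpr h]

variable [DecidableEq σ]

lemma esymmOn_insert_succ {x : σ} {s : Finset σ} (hx : x ∉ s) (j : ℕ) :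
    esymmOn R (insert x s) (j + 1) = esymmOn R s (j + 1) + X x * esymmOn R s j := by
  have hxt : ∀ t ∈ s.powersetCard j, x ∉ t := fun t ht h => hx ((mem_powersetCard.mp ht).1 h)
  rw [esymmOn, powersetCard_succ_insert hx, sum_union, sum_image, esymmOn, esymmOn, mul_sum]
  · exact congrArg _ (sum_congr rfl fun t ht => prod_insert (hxt t ht))
  · intro t₁ h₁ t₂ h₂ h
    rw [← erase_insert (hxt t₁ h₁), ← erase_insert (hxt t₂ h₂), h]
  · refine disjoint_left.mpr fun t ht ht' => ?_
    obtain ⟨u, -, rfl⟩ := mem_image.mp ht'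
    exact hx ((mem_powersetCard.mp ht).1 (mem_insert_self x u))

@[simp]
lemma hsymmOn_zero (s : Finset σ) : hsymmOn R s 0 = 1 := by
  simp [hsymmOn, Sym.eq_nil_of_card_zero]

@[simp]
lemma hsymmOn_empty_succ (j : ℕ) : hsymmOn R (∅ : Finset σ) (j + 1) = 0 := by
  simp [hsymmOn]

lemma sym_insert_filter_notMem {x : σ} {s : Finset σ} (hx : x ∉ s) (k : ℕ) :
    {μ ∈ (insert x s).sym k | x ∉ μ} = s.sym k := by
  ext μ
  simp only [mem_filter, mem_sym_iff, mem_insert]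
  exact ⟨fun ⟨h, hxμ⟩ a ha => (h a ha).resolve_left (by rintro rfl; exact hxμ ha),
    fun h => ⟨fun a ha => .inr (h a ha), fun hxμ => hx (h x hxμ)⟩⟩

lemma sym_succ_insert_filter_mem (x : σ) (s : Finset σ) (k : ℕ) :
    {μ ∈ (insert x s).sym (k + 1) | x ∈ μ} = ((insert x s).sym k).image (x ::ₛ ·) := by
  ext μ
  simp only [mem_filter, mem_image, mem_sym_iff]
  constructor
  · rintro ⟨h, hxμ⟩
    exact ⟨μ.erase x hxμ, fun a ha => h a (Multiset.mem_of_mem_erase ha), Sym.cons_erase hxμ⟩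
  · rintro ⟨ν, hν, rfl⟩
    refine ⟨fun a ha => ?_, Sym.mem_cons_self x ν⟩
    rcases Sym.mem_cons.mp ha with rfl | ha
    exacts [mem_insert_self a s, hν a ha]

lemma hsymmOn_insert_succ {x : σ} {s : Finset σ} (hx : x ∉ s) (k : ℕ) :
    hsymmOn R (insert x s) (k + 1) = hsymmOn R s (k + 1) + X x * hsymmOn R (insert x s) k := by
  rw [hsymmOn, ← sum_filter_not_add_sum_filter _ (x ∈ ·), sym_insert_filter_notMem hx,
    sym_succ_insert_filter_mem, sum_image fun _ _ _ _ h => (Sym.cons_inj_right x _ _).mp h,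
    hsymmOn, hsymmOn, mul_sum]
  simp only [Sym.coe_cons, Multiset.map_cons, Multiset.prod_cons]

variable (R) in
noncomputable def esymmOnGenFun (s : Finset σ) : PowerSeries (MvPolynomial σ R) :=
  ∏ a ∈ s, (1 - PowerSeries.C (X a) * PowerSeries.X)

variable (R) in
noncomputable def hsymmOnGenFun (s : Finset σ) : PowerSeries (MvPolynomial σ R) :=
  PowerSeries.mk (hsymmOn R s)

lemma coeff_esymmOnGenFun (s : Finset σ) (j : ℕ) :
    PowerSeries.coeff j (esymmOnGenFun R s) = (-1) ^ j * esymmOn R s j := by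
  induction s using Finset.induction_on generalizing j with
  | empty =>
    cases j with
    | zero => simp [esymmOnGenFun]
    | succ j =>
      simp [esymmOnGenFun, PowerSeries.coeff_one,
        esymmOn_eq_zero_of_card_lt (s := (∅ : Finset σ)) j.succ_pos]
  | insert x s hx ih =>
    rw [esymmOnGenFun, prod_insert hx, ← esymmOnGenFun, sub_mul, one_mul, map_sub, mul_assoc,
      PowerSeries.coeff_C_mul]
    cases j with
    | zero => simp [ih]
    | succ j =>
      rw [PowerSeries.coeff_succ_X_mul, ih, ih, esymmOn_insert_succ hx]
      ring

lemma one_sub_mul_hsymmOnGenFun_insert {x : σ} {s : Finset σ} (hx : x ∉ s) :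
    (1 - PowerSeries.C (X x) * PowerSeries.X) * hsymmOnGenFun R (insert x s) =
      hsymmOnGenFun R s := by
  refine PowerSeries.ext fun k => ?_
  rcases k with _ | k
  · simp [hsymmOnGenFun]
  · rw [sub_mul, one_mul, map_sub, mul_assoc, PowerSeries.coeff_C_mul,
      PowerSeries.coeff_succ_X_mul]
    simp only [hsymmOnGenFun, PowerSeries.coeff_mk, hsymmOn_insert_succ hx, add_sub_cancel_right]

lemma esymmOnGenFun_mul_hsymmOnGenFun (s : Finset σ) :
    esymmOnGenFun R s * hsymmOnGenFun R s = 1 := by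
  induction s using Finset.induction_on with
  | empty =>
    refine PowerSeries.ext fun k => ?_
    rcases k with _ | k <;> simp [esymmOnGenFun, hsymmOnGenFun, PowerSeries.coeff_one]
  | insert x s hx ih =>
    rw [esymmOnGenFun, prod_insert hx, ← esymmOnGenFun, mul_comm (1 - _), mul_assoc,
      one_sub_mul_hsymmOnGenFun_insert hx, ih]

lemma esymmOnGenFun_mul_hsymmOnGenFun_of_subset {s t : Finset σ} (h : s ⊆ t) :
    esymmOnGenFun R t * hsymmOnGenFun R s = esymmOnGenFun R (t \ s) := by
  rw [esymmOnGenFun, ← prod_sdiff h, ← esymmOnGenFun, ← esymmOnGenFun, mul_assoc,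
    esymmOnGenFun_mul_hsymmOnGenFun, mul_one]

lemma sum_antidiagonal_esymmOn_mul_hsymmOn {s t : Finset σ} (h : s ⊆ t) {i : ℕ}
    (hi : #(t \ s) < i) :
    ∑ p ∈ antidiagonal i, (-1) ^ p.1 * esymmOn R t p.1 * hsymmOn R s p.2 = 0 := by
  have := congrArg (PowerSeries.coeff i) (esymmOnGenFun_mul_hsymmOnGenFun_of_subset (R := R) h)
  rw [coeff_esymmOnGenFun, esymmOn_eq_zero_of_card_lt hi, mul_zero, PowerSeries.coeff_mul] at this
  simpa only [coeff_esymmOnGenFun, hsymmOnGenFun, PowerSeries.coeff_mk] using this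

lemma hsymmOn_mem_span_esymmOn {s t : Finset σ} (h : s ⊆ t) {i : ℕ} (hi : #(t \ s) < i) :
    hsymmOn R s i ∈ Ideal.span (esymmOn R t '' Set.Icc 1 i) := by
  obtain ⟨i, rfl⟩ : ∃ i', i = i' + 1 := Nat.exists_eq_add_one.mpr (by omega)
  have hsum := sum_antidiagonal_esymmOn_mul_hsymmOn (R := R) h hi
  rw [Nat.sum_antidiagonal_succ] at hsum
  simp only [pow_zero, esymmOn_zero, one_mul] at hsum
  rw [eq_neg_of_add_eq_zero_left hsum]
  refine neg_mem (sum_mem fun p hp => Ideal.mul_mem_right _ _ (Ideal.mul_mem_left _ _ ?_))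
  have := mem_antidiagonal.mp hp
  exact Ideal.subset_span ⟨p.1 + 1, ⟨by omega, by omega⟩, rfl⟩

lemma prod_map_X_eq_monomial (μ : Multiset σ) :
    (μ.map (X : σ → MvPolynomial σ R)).prod = monomial (Multiset.toFinsupp μ) 1 := by
  induction μ using Multiset.induction_on with
  | empty => simp
  | cons a μ ih =>
    rw [Multiset.map_cons, Multiset.prod_cons, ih, ← Multiset.singleton_add,
      Multiset.toFinsupp_add, Multiset.toFinsupp_singleton, X, monomial_mul, one_mul]

lemma hsymmOn_eq_sum_monomial (s : Finset σ) (k : ℕ) :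
    hsymmOn R s k = ∑ d ∈ (s.sym k).image (fun μ : Sym σ k => Multiset.toFinsupp (μ : Multiset σ)),
      monomial d 1 := by
  rw [hsymmOn, sum_image fun _ _ _ _ h => Sym.coe_injective (Multiset.toFinsupp.injective h)]
  simp only [prod_map_X_eq_monomial]

lemma mem_support_hsymmOn [Nontrivial R] {s : Finset σ} {k : ℕ} {d : σ →₀ ℕ} :
    d ∈ (hsymmOn R s k).support ↔ ↑d.support ⊆ (s : Set σ) ∧ d.degree = k := by
  simp only [hsymmOn_eq_sum_monomial, mem_support_iff, coeff_sum, coeff_monomial, sum_ite_eq',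
    ite_ne_right_iff, ne_eq, one_ne_zero, not_false_eq_true, and_true, mem_image, mem_sym_iff]
  constructor
  · rintro ⟨μ, hμ, rfl⟩
    refine ⟨fun a ha => hμ a (Multiset.mem_toFinset.mp ha), ?_⟩
    exact (Multiset.toFinsupp_sum_eq _).trans μ.2
  · rintro ⟨hsupp, hdeg⟩
    refine ⟨⟨Finsupp.toMultiset d, by rw [Finsupp.card_toMultiset, ← hdeg]; rfl⟩,
      fun a ha => hsupp ((Finsupp.mem_toMultiset d a).mp ha), Finsupp.toMultiset_toFinsupp d⟩

end MvPolynomial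

lemma Finsupp.toLex_le_toLex_single_degree {ι : Type*} [LinearOrder ι] {d : ι →₀ ℕ} {a : ι}
    (hd : ∀ b < a, d b = 0) : toLex d ≤ toLex (single a d.degree) := by
  rcases (le_degree a d).lt_or_eq with hlt | heq
  · refine le_of_lt (Finsupp.Lex.lt_iff.mpr ⟨a, fun b hb => ?_, by simpa using hlt⟩)
    simp [hd b hb, single_eq_of_ne hb.ne]
  · have hle : single a (d a) ≤ d := single_le_iff.mpr le_rfl
    have hrest : (d - single a (d a)).degree = 0 := by
      have := congrArg degree (tsub_add_cancel_of_le hle)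
      rw [map_add, degree_single, ← heq] at this
      omega
    have hsingle : d = single a (d a) := by
      have := tsub_add_cancel_of_le hle
      rwa [(degree_eq_zero_iff _).mp hrest, zero_add, eq_comm] at this
    rw [← heq, ← hsingle]

lemma isLexLeadMonom_hsymmOn {R : Type} [CommRing R] [Nontrivial R] {n : ℕ}
    {s : Finset (Fin n)} {q : Fin n} (hq : q ∈ s) (hmax : ∀ a ∈ s, a ≤ q) (k : ℕ) :
    IsLexLeadMonom (hsymmOn R s k) (Finsupp.single q k) := by
  refine ⟨mem_support_hsymmOn.mpr ⟨?_, Finsupp.degree_single q k⟩, fun d hd => ?_⟩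
  · exact (Finset.coe_subset.mpr Finsupp.support_single_subset).trans (by simpa using hq)
  obtain ⟨hsupp, rfl⟩ := mem_support_hsymmOn.mp hd
  rw [Finsupp.equivMapDomain_single, Fin.revPerm_apply, ← Finsupp.degree_mapDomain Fin.revPerm,
    ← Finsupp.equivMapDomain_eq_mapDomain]
  refine Finsupp.toLex_le_toLex_single_degree fun b hb => ?_
  rw [Finsupp.equivMapDomain_apply, Fin.revPerm_symm, Fin.revPerm_apply]
  refine Finsupp.notMem_support_iff.mp fun hb' => ?_
  have := hmax _ (hsupp hb')
  rw [Fin.rev_le_iff] at this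
  exact absurd hb this.not_gt

/-- For 1 ≤ i ≤ k ≤ n, the ideal ⟨e_1(x_1,…,x_n),…,e_k(x_1,…,x_n)⟩ contains a polynomial
whose lex (x_n > ⋯ > x_1) leading monomial is x_{n-i+1}^i; in particular
h_i(x_1,…,x_{n-i+1}) is such a polynomial. -/
theorem stmt17 (R : Type) [CommRing R] [Nontrivial R] (n k i : ℕ)
    (hi : 1 ≤ i) (hik : i ≤ k) (hkn : k ≤ n) :
    hsymb R n (n + 1 - i) i ∈ Ideal.span ((fun j => esymb R n n j) '' Set.Icc 1 k) ∧
    IsLexLeadMonom (hsymb R n (n + 1 - i) i)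
      (Finsupp.single (⟨n - i, by omega⟩ : Fin n) i) := by
  set s : Finset (Fin n) := {a | (a : ℕ) < n + 1 - i}
  have hesymb : (fun j => esymb R n n j) = esymmOn R univ := by
    ext1 j
    rw [esymb, filter_true_of_mem fun a _ => a.isLt, esymmOn]
  have hcard : #(univ \ s) < i := by
    rw [card_sdiff_of_subset (subset_univ s), card_univ, Fintype.card_fin, Fin.card_filter_val_lt]
    omega
  refine ⟨?_, isLexLeadMonom_hsymmOn (by simp; omega) (fun a ha => ?_) i⟩
  · rw [hesymb]
    exact Ideal.span_mono (Set.image_mono (Set.Icc_subset_Icc_right hik))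
      (hsymmOn_mem_span_esymmOn (subset_univ s) hcard)
  · simp only [mem_filter, mem_univ, true_and] at ha
    exact Fin.mk_le_mk.mpr (by omega)
end

section
/- In the polynomial ring in variables x_1,...,x_n, the sum h_k(x_1,...,x_{n-k+1}) + ∑_{i=1}^{k} (-1)^i · e_i(x_1,...,x_n) · h_{k-i}(x_1,...,x_{n-k+1}) equals 0 for all 1 ≤ k ≤ n, generalizing the classical Newton-type relation ∑_{i=0}^{k}(-1)^i e_i h_{k-i} = 0 (in which all polynomials are in the full variable set) to a mixed-variable-set setting. -/
open MvPolynomial Finset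

namespace Stmt18Aux

variable (R : Type) [CommRing R] {n : ℕ}

/-- elementary symmetric polynomial over an index finset -/
noncomputable def eT (T : Finset (Fin n)) (a : ℕ) : MvPolynomial (Fin n) R :=
  ∑ S ∈ T.powersetCard a, ∏ i ∈ S, X i

/-- complete homogeneous symmetric polynomial over an index finset -/
noncomputable def hT (T : Finset (Fin n)) (j : ℕ) : MvPolynomial (Fin n) R :=
  ∑ μ ∈ T.sym j, ((μ : Multiset (Fin n)).map X).prod

@[simp] theorem eT_zero (T : Finset (Fin n)) : eT R T 0 = 1 := by
  simp [eT]

@[simp] theorem hT_zero (T : Finset (Fin n)) : hT R T 0 = 1 := by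
  rw [hT, Finset.sym_zero, Finset.sum_singleton]; rfl

theorem eT_of_card_lt {T : Finset (Fin n)} {a : ℕ} (h : T.card < a) : eT R T a = 0 := by
  rw [eT, Finset.powersetCard_eq_empty.2 h, Finset.sum_empty]

theorem eT_insert {x : Fin n} {T : Finset (Fin n)} (hx : x ∉ T) (a : ℕ) :
    eT R (insert x T) (a + 1) = eT R T (a + 1) + X x * eT R T a := by
  have hnot : ∀ S ∈ T.powersetCard (a + 1), x ∉ S :=
    fun S hS hxS => hx ((Finset.mem_powersetCard.1 hS).1 hxS)
  have hnot' : ∀ S ∈ T.powersetCard a, x ∉ S :=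
    fun S hS hxS => hx ((Finset.mem_powersetCard.1 hS).1 hxS)
  rw [eT, Finset.powersetCard_succ_insert hx, Finset.sum_union, Finset.sum_image]
  · rw [eT, eT, Finset.mul_sum]
    congr 1
    exact Finset.sum_congr rfl fun S hS => Finset.prod_insert (hnot' S hS)
  · intro S hS S' hS' h
    have h2 := congrArg (fun u : Finset (Fin n) => u.erase x) h
    simpa [Finset.erase_insert (hnot' S hS), Finset.erase_insert (hnot' S' hS')] using h2
  · rw [Finset.disjoint_right]
    rintro S hS hS'
    obtain ⟨S', _, rfl⟩ := Finset.mem_image.1 hS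
    exact hnot _ hS' (Finset.mem_insert_self x S')

theorem hT_insert {x : Fin n} {T : Finset (Fin n)} (hx : x ∉ T) (j : ℕ) :
    hT R (insert x T) (j + 1) = hT R T (j + 1) + X x * hT R (insert x T) j := by
  classical
  rw [hT,
    ← Finset.sum_filter_add_sum_filter_not ((insert x T).sym (j + 1)) (fun μ => x ∈ μ)]
  have h1 : ((insert x T).sym (j + 1)).filter (fun μ => ¬ x ∈ μ) = T.sym (j + 1) := by
    ext μ
    simp only [Finset.mem_filter, Finset.mem_sym_iff, Finset.mem_insert]
    constructor
    · rintro ⟨h, hxμ⟩ a ha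
      rcases h a ha with rfl | h'
      · exact absurd ha hxμ
      · exact h'
    · intro h
      exact ⟨fun a ha => Or.inr (h a ha), fun hxμ => hx (h x hxμ)⟩
  have h2 : ∑ μ ∈ ((insert x T).sym (j + 1)).filter (fun μ => x ∈ μ),
      ((μ : Multiset (Fin n)).map X).prod = X x * hT R (insert x T) j := by
    rw [hT, Finset.mul_sum]
    refine Finset.sum_bij'
      (fun μ hμ => μ.erase x (Finset.mem_filter.1 hμ).2)
      (fun ν _ => x ::ₛ ν) ?_ ?_ ?_ ?_ ?_
    · intro μ hμ
      rw [Finset.mem_sym_iff]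
      intro a ha
      have ha' : a ∈ ((μ : Multiset (Fin n)).erase x) := by
        rw [← Sym.coe_erase]; exact ha
      exact Finset.mem_sym_iff.1 (Finset.mem_filter.1 hμ).1 a
        (Sym.mem_coe.1 (Multiset.mem_of_mem_erase ha'))
    · intro ν hν
      rw [Finset.mem_filter]
      refine ⟨Finset.mem_sym_iff.2 fun a ha => ?_, Sym.mem_cons_self x ν⟩
      rcases Sym.mem_cons.1 ha with h | ha
      · exact Finset.mem_insert.2 (Or.inl h)
      · exact Finset.mem_sym_iff.1 hν a ha
    · intro μ hμ
      exact Sym.cons_erase (Finset.mem_filter.1 hμ).2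
    · intro ν hν
      exact Sym.erase_cons_head ν x _
    · intro μ hμ
      conv_lhs => rw [← Sym.cons_erase (Finset.mem_filter.1 hμ).2]
      rw [Sym.coe_cons, Multiset.map_cons, Multiset.prod_cons]
  rw [h1, h2]
  conv_rhs => rw [hT]
  ring

theorem classical_id (T : Finset (Fin n)) (j : ℕ) :
    ∑ a ∈ Finset.range (j + 1),
      (-1 : MvPolynomial (Fin n) R) ^ a * eT R T a * hT R T (j - a) =
      if j = 0 then 1 else 0 := by
  classical
  induction T using Finset.induction_on generalizing j with
  | empty =>
    cases j with
    | zero => simp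
    | succ j =>
      rw [if_neg (Nat.succ_ne_zero j)]
      refine Finset.sum_eq_zero fun a ha => ?_
      cases a with
      | zero =>
        have h0 : hT R (∅ : Finset (Fin n)) (j + 1) = 0 := by
          rw [hT, Finset.sym_empty, Finset.sum_empty]
        simp [h0]
      | succ a =>
        have h0 : eT R (∅ : Finset (Fin n)) (a + 1) = 0 :=
          eT_of_card_lt R (by simp)
        simp [h0]
  | @insert x T hx ih =>
    cases j with
    | zero => simp
    | succ j =>
      have step1 :
          ∑ a ∈ Finset.range (j + 1 + 1),
            (-1 : MvPolynomial (Fin n) R) ^ a * eT R (insert x T) a *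
              hT R (insert x T) (j + 1 - a)
          = (∑ a ∈ Finset.range (j + 1),
              (-1 : MvPolynomial (Fin n) R) ^ (a + 1) * eT R T (a + 1) *
                hT R (insert x T) (j - a)
              + hT R (insert x T) (j + 1))
            - X x * ∑ a ∈ Finset.range (j + 1),
                (-1 : MvPolynomial (Fin n) R) ^ a * eT R T a *
                  hT R (insert x T) (j - a) := by
        rw [Finset.sum_range_succ']
        have hterm : ∀ a ∈ Finset.range (j + 1),
            (-1 : MvPolynomial (Fin n) R) ^ (a + 1) * eT R (insert x T) (a + 1) *
              hT R (insert x T) (j + 1 - (a + 1))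
            = (-1 : MvPolynomial (Fin n) R) ^ (a + 1) * eT R T (a + 1) *
                hT R (insert x T) (j - a)
              - X x * ((-1 : MvPolynomial (Fin n) R) ^ a * eT R T a *
                  hT R (insert x T) (j - a)) := by
          intro a ha
          have h1 : j + 1 - (a + 1) = j - a := by omega
          rw [h1, eT_insert R hx]
          ring
        rw [Finset.sum_congr rfl hterm, Finset.sum_sub_distrib, ← Finset.mul_sum]
        simp only [pow_zero, one_mul, eT_zero, Nat.sub_zero]
        ring
      have step2 :
          ∑ a ∈ Finset.range (j + 1),
            (-1 : MvPolynomial (Fin n) R) ^ (a + 1) * eT R T (a + 1) *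
              hT R (insert x T) (j - a)
            + hT R (insert x T) (j + 1)
          = ∑ a ∈ Finset.range (j + 1 + 1),
              (-1 : MvPolynomial (Fin n) R) ^ a * eT R T a *
                hT R (insert x T) (j + 1 - a) := by
        rw [Finset.sum_range_succ' (fun a =>
          (-1 : MvPolynomial (Fin n) R) ^ a * eT R T a *
            hT R (insert x T) (j + 1 - a)) (j + 1)]
        simp only [pow_zero, one_mul, eT_zero, Nat.sub_zero]
        congr 1
        refine Finset.sum_congr rfl fun a ha => ?_
        have h1 : j + 1 - (a + 1) = j - a := by omega
        rw [h1]
      have step3 :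
          ∑ a ∈ Finset.range (j + 1 + 1),
            (-1 : MvPolynomial (Fin n) R) ^ a * eT R T a *
              hT R (insert x T) (j + 1 - a)
            - X x * ∑ a ∈ Finset.range (j + 1),
                (-1 : MvPolynomial (Fin n) R) ^ a * eT R T a *
                  hT R (insert x T) (j - a)
          = ∑ a ∈ Finset.range (j + 1 + 1),
              (-1 : MvPolynomial (Fin n) R) ^ a * eT R T a * hT R T (j + 1 - a) := by
        rw [Finset.sum_range_succ,
          Finset.sum_range_succ (fun a =>
            (-1 : MvPolynomial (Fin n) R) ^ a * eT R T a * hT R T (j + 1 - a)) (j + 1)]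
        have hterm : ∀ a ∈ Finset.range (j + 1),
            (-1 : MvPolynomial (Fin n) R) ^ a * eT R T a *
              hT R (insert x T) (j + 1 - a)
            = (-1 : MvPolynomial (Fin n) R) ^ a * eT R T a * hT R T (j + 1 - a)
              + X x * ((-1 : MvPolynomial (Fin n) R) ^ a * eT R T a *
                  hT R (insert x T) (j - a)) := by
          intro a ha
          have ha' := Finset.mem_range.1 ha
          have h1 : j + 1 - a = (j - a) + 1 := by omega
          rw [h1, hT_insert R hx]
          ring
        rw [Finset.sum_congr rfl hterm, Finset.sum_add_distrib, ← Finset.mul_sum]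
        simp only [Nat.sub_self, hT_zero]
        ring
      rw [step1, step2, step3, ih (j + 1)]

/-- `∏_{i∈T} (1 - X i t)` -/
noncomputable def Ppoly (T : Finset (Fin n)) : Polynomial (MvPolynomial (Fin n) R) :=
  ∏ i ∈ T, (1 - Polynomial.C (X i) * Polynomial.X)

theorem coeff_Ppoly (T : Finset (Fin n)) (a : ℕ) :
    (Ppoly R T).coeff a = (-1 : MvPolynomial (Fin n) R) ^ a * eT R T a := by
  classical
  induction T using Finset.induction_on generalizing a with
  | empty =>
    rw [Ppoly, Finset.prod_empty]
    cases a with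
    | zero => simp
    | succ a =>
      have h0 : eT R (∅ : Finset (Fin n)) (a + 1) = 0 := eT_of_card_lt R (by simp)
      simp [h0, Polynomial.coeff_one]
  | @insert x T hx ih =>
    have hP : Ppoly R (insert x T)
        = (1 - Polynomial.C (X x) * Polynomial.X) * Ppoly R T := by
      rw [Ppoly, Ppoly, Finset.prod_insert hx]
    rw [hP, sub_mul, one_mul]
    cases a with
    | zero =>
      simp [Polynomial.coeff_sub, Polynomial.mul_coeff_zero, mul_assoc,
        Polynomial.coeff_C_mul, ih 0]
    | succ a =>
      rw [Polynomial.coeff_sub, mul_assoc, Polynomial.coeff_C_mul,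
        Polynomial.coeff_X_mul, ih, ih, eT_insert R hx]
      ring

theorem master (A B : Finset (Fin n)) (hd : Disjoint A B) (k : ℕ) (hB : B.card < k) :
    ∑ i ∈ Finset.range (k + 1),
      (-1 : MvPolynomial (Fin n) R) ^ i * eT R (A ∪ B) i * hT R A (k - i) = 0 := by
  classical
  set HA : Polynomial (MvPolynomial (Fin n) R) :=
    ∑ j ∈ Finset.range (k + 1), Polynomial.C (hT R A j) * Polynomial.X ^ j with hHA
  have coeffHA : ∀ j ≤ k, HA.coeff j = hT R A j := by
    intro j hj
    rw [hHA, Polynomial.finset_sum_coeff]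
    rw [Finset.sum_eq_single j]
    · rw [Polynomial.coeff_C_mul, Polynomial.coeff_X_pow, if_pos rfl, mul_one]
    · intro b hb hbj
      rw [Polynomial.coeff_C_mul, Polynomial.coeff_X_pow,
        if_neg (fun h => hbj h.symm), mul_zero]
    · intro hj'
      exact absurd (Finset.mem_range.2 (by omega)) hj'
  have keyA : ∀ j ≤ k, (Ppoly R A * HA).coeff j = if j = 0 then 1 else 0 := by
    intro j hj
    rw [Polynomial.coeff_mul, Finset.Nat.sum_antidiagonal_eq_sum_range_succ_mk]
    have hterm : ∀ a ∈ Finset.range (j + 1),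
        (Ppoly R A).coeff a * HA.coeff (j - a)
        = (-1 : MvPolynomial (Fin n) R) ^ a * eT R A a * hT R A (j - a) := by
      intro a ha
      rw [coeff_Ppoly, coeffHA _ (by omega)]
    rw [Finset.sum_congr rfl hterm, classical_id]
  have hsum : ∑ i ∈ Finset.range (k + 1),
      (-1 : MvPolynomial (Fin n) R) ^ i * eT R (A ∪ B) i * hT R A (k - i)
      = (Ppoly R (A ∪ B) * HA).coeff k := by
    rw [Polynomial.coeff_mul, Finset.Nat.sum_antidiagonal_eq_sum_range_succ_mk]
    refine Finset.sum_congr rfl fun a ha => ?_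
    have ha' := Finset.mem_range.1 ha
    rw [coeff_Ppoly, coeffHA _ (by omega)]
  rw [hsum]
  have hsplit : Ppoly R (A ∪ B) * HA = Ppoly R B * (Ppoly R A * HA) := by
    rw [Ppoly, Ppoly, Ppoly, Finset.prod_union hd]
    ring
  rw [hsplit, Polynomial.coeff_mul, Finset.Nat.sum_antidiagonal_eq_sum_range_succ_mk]
  refine Finset.sum_eq_zero fun a ha => ?_
  have ha' := Finset.mem_range.1 ha
  rcases eq_or_ne a k with rfl | hak
  · rw [coeff_Ppoly, eT_of_card_lt R hB]
    ring
  · rw [keyA (k - a) (by omega), if_neg (by omega), mul_zero]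

end Stmt18Aux

/-- h_k(x_1,…,x_{n-k+1}) + ∑_{i=1}^{k} (-1)^i e_i(x_1,…,x_n) h_{k-i}(x_1,…,x_{n-k+1}) = 0
for 1 ≤ k ≤ n. -/
theorem stmt18 (R : Type) [CommRing R] (n k : ℕ) (hk : 1 ≤ k) (hkn : k ≤ n) :
    hsymb R n (n + 1 - k) k +
      ∑ i ∈ Finset.Icc 1 k, (-1 : MvPolynomial (Fin n) R) ^ i *
        esymb R n n i * hsymb R n (n + 1 - k) (k - i) = 0 := by
  classical
  open Stmt18Aux in
  have hm : n + 1 - k ≤ n := by omega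
  set A := Finset.univ.filter (fun i : Fin n => (i : ℕ) < n + 1 - k) with hA
  set U := Finset.univ.filter (fun i : Fin n => (i : ℕ) < n) with hU
  have hAU : A ⊆ U := by
    intro i hi
    rw [hA, Finset.mem_filter] at hi
    rw [hU, Finset.mem_filter]
    exact ⟨hi.1, i.isLt⟩
  have hUn : A ∪ (U \ A) = U := Finset.union_sdiff_of_subset hAU
  have hdisj : Disjoint A (U \ A) := Finset.disjoint_sdiff
  have hcardA : A.card = n + 1 - k := by
    have hAeq : A = Finset.map (Fin.castLEEmb hm) Finset.univ := by
      ext i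
      rw [hA]
      simp only [Finset.mem_filter, Finset.mem_univ, true_and, Finset.mem_map]
      constructor
      · intro hi
        exact ⟨⟨(i : ℕ), hi⟩, by ext; simp⟩
      · rintro ⟨j, -, rfl⟩
        simpa using j.isLt
    rw [hAeq, Finset.card_map, Finset.card_univ, Fintype.card_fin]
  have hcardU : U.card = n := by
    have : U = Finset.univ := by
      rw [hU]
      refine Finset.filter_true_of_mem fun i _ => i.isLt
    rw [this, Finset.card_univ, Fintype.card_fin]
  have hcardB : (U \ A).card < k := by
    rw [Finset.card_sdiff_of_subset hAU, hcardU, hcardA]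
    omega
  have master0 := Stmt18Aux.master R A (U \ A) hdisj k hcardB
  rw [hUn] at master0
  rw [Finset.sum_range_succ'] at master0
  simp only [pow_zero, one_mul, Stmt18Aux.eT_zero, Nat.sub_zero] at master0
  have hsum_eq : ∑ i ∈ Finset.Icc 1 k, (-1 : MvPolynomial (Fin n) R) ^ i *
        esymb R n n i * hsymb R n (n + 1 - k) (k - i)
      = ∑ i ∈ Finset.range k, (-1 : MvPolynomial (Fin n) R) ^ (i + 1) *
          Stmt18Aux.eT R U (i + 1) * Stmt18Aux.hT R A (k - (i + 1)) := by
    rw [← Finset.Ico_add_one_right_eq_Icc, Finset.sum_Ico_eq_sum_range]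
    rw [show k + 1 - 1 = k by omega]
    refine Finset.sum_congr rfl fun i hi => ?_
    rw [show 1 + i = i + 1 by omega]
    rfl
  have hh : hsymb R n (n + 1 - k) k = Stmt18Aux.hT R A k := rfl
  rw [hh, hsum_eq, add_comm]
  exact master0
end
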